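/- arXiv:1804.02149 — 4 statements merged into one kernel-verified Lean document; each statement's English description precedes it below -/
import Mathlib

section
/- If a privacy mechanism satisfies ε-localized information privacy (i.e., for all inputs x and outputs y, e^{-ε} ≤ Pr(X=x)/Pr(X=x|Y=y) ≤ e^{ε}), then the mutual information I(X;Y) between input X and output Y is at most ε (measured in nats). -/
open Real Finset

/-- If a mechanism satisfies ε-localized information privacy (prior/posterior ratio
bounded by `exp ε` on both sides), then the mutual information `I(X;Y)` (in nats)
is at most `ε`.  The joint distribution of `(X, Y)` is `p`, with marginals
`∑ b, p a b` (for `X`) and `∑ a, p a b` (for `Y`). -/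
theorem lip_implies_mip {A B : Type*} [Fintype A] [Fintype B]
    (ε : ℝ) (p : A → B → ℝ)
    (hp : ∀ a b, 0 ≤ p a b)
    (hsum : ∑ a, ∑ b, p a b = 1)
    (hX : ∀ a, 0 < ∑ b, p a b)
    (hY : ∀ b, 0 < ∑ a, p a b)
    (hLIP : ∀ a b, exp (-ε) ≤ (∑ b', p a b') / (p a b / ∑ a', p a' b) ∧
      (∑ b', p a b') / (p a b / ∑ a', p a' b) ≤ exp ε) :
    ∑ a, ∑ b, p a b * log (p a b / ((∑ b', p a b') * (∑ a', p a' b))) ≤ ε := by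
  have hpos : ∀ a b, 0 < p a b := by
    intro a b
    rcases lt_or_eq_of_le (hp a b) with h | h
    · exact h
    · exfalso
      have h1 := (hLIP a b).1
      rw [← h, zero_div, div_zero] at h1
      exact absurd h1 (not_le.mpr (exp_pos _))
  have key : ∀ a b, p a b * log (p a b / ((∑ b', p a b') * (∑ a', p a' b))) ≤ p a b * ε := by
    intro a b
    apply mul_le_mul_of_nonneg_left _ (hp a b)
    have hr : (∑ b', p a b') / (p a b / ∑ a', p a' b)
        = ((∑ b', p a b') * (∑ a', p a' b)) / p a b := by
      field_simp
    have h1 := (hLIP a b).1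
    rw [hr] at h1
    have hq : 0 < ((∑ b', p a b') * (∑ a', p a' b)) / p a b :=
      div_pos (mul_pos (hX a) (hY b)) (hpos a b)
    have := Real.log_le_log (exp_pos _) h1
    rw [Real.log_exp] at this
    have hinv : p a b / ((∑ b', p a b') * (∑ a', p a' b))
        = (((∑ b', p a b') * (∑ a', p a' b)) / p a b)⁻¹ := by
      rw [inv_div]
    rw [hinv, Real.log_inv]
    linarith
  calc ∑ a, ∑ b, p a b * log (p a b / ((∑ b', p a b') * (∑ a', p a' b)))
      ≤ ∑ a, ∑ b, p a b * ε := by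
        apply Finset.sum_le_sum; intro a _
        exact Finset.sum_le_sum fun b _ => key a b
    _ = ε := by
        simp_rw [← Finset.sum_mul]
        rw [hsum, one_mul]
end

section
/- Under the binary channel with perturbation probabilities q₀ = P₁/e^{ε} and q₁ = (1−P₁)/e^{ε}, the mean square error of the MMSE estimator equals P₁(1−P₁)(2e^{−ε} − e^{−2ε}). -/
open Real

/-- Under the binary channel with perturbation probabilities `q₀ = P₁·e^{-ε}`
and `q₁ = (1-P₁)·e^{-ε}`, the mean square error of the MMSE estimator,
`Var(X) - Var(E[X|Y]) = P₁(1-P₁) - P₁²(l₀-q₁)²/(l₀l₁)`, equals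
`P₁(1-P₁)(2e^{-ε} - e^{-2ε})`. -/
theorem mse_opt_lip_binary (P₁ ε : ℝ) (hP : P₁ ∈ Set.Ioo (0:ℝ) 1) (hε : 0 ≤ ε) :
    let q₀ := P₁ * exp (-ε)
    let q₁ := (1 - P₁) * exp (-ε)
    let l₀ := (1 - P₁) * (1 - q₀) + P₁ * q₁
    let l₁ := (1 - P₁) * q₀ + P₁ * (1 - q₁)
    P₁ * (1 - P₁) - P₁ ^ 2 * (l₀ - q₁) ^ 2 / (l₀ * l₁)
      = P₁ * (1 - P₁) * (2 * exp (-ε) - exp (-2 * ε)) := by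
  obtain ⟨h0, h1⟩ := hP
  have hP0 : P₁ ≠ 0 := ne_of_gt h0
  have hP1 : 1 - P₁ ≠ 0 := sub_ne_zero.mpr h1.ne'
  have he2 : exp (-2 * ε) = exp (-ε) ^ 2 := by
    rw [show (-2:ℝ)*ε = -ε + -ε by ring, Real.exp_add]; ring
  intro q₀ q₁ l₀ l₁
  have hl0 : l₀ = 1 - P₁ := by simp only [l₀, q₀, q₁]; ring
  have hl1 : l₁ = P₁ := by simp only [l₁, q₀, q₁]; ring
  rw [hl0, hl1, he2]
  simp only [q₁]
  field_simp
  ring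
end

section
/- For any ε ≥ 0 and any P₁ ∈ [0,1], the optimal LIP mean square error P₁(1−P₁)(2e^{−ε}−e^{−2ε}) is at most the optimal LDP mean square error P₁(1−P₁) − [P₁(1−P₁)(1−e^{ε})]²/[(1−P₁+P₁e^{ε})(e^{ε}−P₁e^{ε}+P₁)]. -/
open Real

/-- For any `ε ≥ 0` and any `P₁ ∈ [0,1]`, the optimal-LIP mean square error
`P₁(1-P₁)(2e^{-ε} - e^{-2ε})` is at most the optimal-LDP mean square error
`P₁(1-P₁) - [P₁(1-P₁)(1-e^{ε})]² / [(1-P₁+P₁e^{ε})(e^{ε}-P₁e^{ε}+P₁)]`. -/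
theorem lip_mse_le_ldp_mse (P₁ ε : ℝ) (hP : P₁ ∈ Set.Icc (0:ℝ) 1) (hε : 0 ≤ ε) :
    P₁ * (1 - P₁) * (2 * exp (-ε) - exp (-2 * ε)) ≤
      P₁ * (1 - P₁) - (P₁ * (1 - P₁) * (1 - exp ε)) ^ 2 /
        ((1 - P₁ + P₁ * exp ε) * (exp ε - P₁ * exp ε + P₁)) := by
  obtain ⟨hp0, hp1⟩ := hP
  have ht : (1:ℝ) ≤ exp ε := Real.one_le_exp hε
  have ht0 : (0:ℝ) < exp ε := Real.exp_pos ε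
  have he1 : exp (-ε) = (exp ε)⁻¹ := Real.exp_neg ε
  have he2 : exp (-2 * ε) = ((exp ε) * (exp ε))⁻¹ := by
    rw [show (-2*ε) = -(ε + ε) by ring, Real.exp_neg, Real.exp_add]
  rw [he1, he2]
  set t := exp ε with htdef
  have hD1 : (0:ℝ) < 1 - P₁ + P₁ * t := by nlinarith
  have hD2 : (0:ℝ) < t - P₁ * t + P₁ := by nlinarith
  have hq : (0:ℝ) ≤ 1 - P₁ := by linarith
  have hrw : P₁ * (1 - P₁) * (2 * t⁻¹ - (t * t)⁻¹)
      = P₁ * (1 - P₁) - P₁ * (1 - P₁) * (t - 1) ^ 2 / (t * t) := by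
    field_simp
    ring
  rw [hrw]
  have key : (P₁ * (1 - P₁) * (1 - t)) ^ 2 / ((1 - P₁ + P₁ * t) * (t - P₁ * t + P₁))
      ≤ P₁ * (1 - P₁) * (t - 1) ^ 2 / (t * t) := by
    rw [div_le_div_iff₀ (by positivity) (by positivity)]
    nlinarith [mul_nonneg (mul_nonneg (mul_nonneg hp0 hq) (sq_nonneg (t - 1)))
        (by nlinarith : (0:ℝ) ≤ P₁ * (1 - P₁) + t * (P₁ ^ 2 + (1 - P₁) ^ 2))]
  linarith
end

section
/- Consider the centralized setting: D₁,…,D_N are i.i.d. Bernoulli(P₁), S = Σᵢ Dᵢ, and Y is an output depending only on S. If for all s and y, e^{−ε} ≤ Pr(S=s)/Pr(S=s|Y=y) ≤ e^{ε}, then for every i, j ∈ {0,1}, and y: e^{−ε} ≤ Pr(Dᵢ=j)/Pr(Dᵢ=j|Y=y) ≤ e^{ε}. -/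
open Finset Real

theorem sum_filter_prod_bernoulli {N : ℕ} (f : Bool → ℝ) (hf : f false + f true = 1)
    (i : Fin N) (j : Bool) :
    ∑ x ∈ univ.filter (fun x : Fin N → Bool => x i = j), ∏ k, f (x k) = f j := by
  have h := Finset.sum_nbij' (s := univ.filter (fun x : Fin N → Bool => x i = j))
    (t := (univ : Finset ({k : Fin N // k ≠ i} → Bool)))
    (i := fun x k => x k.1)
    (j := fun g => fun k => if h : k = i then j else g ⟨k, h⟩)
    (f := fun x => ∏ k, f (x k))
    (g := fun g => f j * ∏ k : {k : Fin N // k ≠ i}, f (g k))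
    (fun x hx => by simp)
    (fun g hg => by simp)
    (fun x hx => by
      simp only [Finset.mem_filter, Finset.mem_univ, true_and] at hx
      funext k
      by_cases h : k = i <;> simp [h, hx])
    (fun g hg => by funext k; simp [k.2])
    (fun x hx => by
      simp only [Finset.mem_filter, Finset.mem_univ, true_and] at hx
      show ∏ k, f (x k) = f j * ∏ k : {k : Fin N // k ≠ i}, f (x k.1)
      rw [← Finset.mul_prod_erase univ _ (Finset.mem_univ i), hx]
      congr 1
      rw [Finset.prod_subtype (p := fun k => k ≠ i) (univ.erase i) (by simp) (fun k => f (x k))])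
  rw [h, ← Finset.mul_sum, ← Fintype.piFinset_univ, ← Finset.prod_univ_sum]
  simp [hf, add_comm]


/-- Centralized setting: `D₁,…,D_N` i.i.d. Bernoulli(`P₁`), `S = ∑ᵢ Dᵢ`, and
`Y` generated from `S` by a channel `Q`.  If the mechanism satisfies ε-IP at
the level of `S` (prior/posterior ratio of `S` bounded by `e^{±ε}`), then for
every `i`, `j ∈ {0,1}` and output `y`, the prior/posterior ratio of `Dᵢ = j`
is also bounded by `e^{±ε}`. -/
theorem cip_from_s_level {N : ℕ} {B : Type*} [Fintype B]
    (P₁ ε : ℝ) (hP : P₁ ∈ Set.Ioo (0:ℝ) 1)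
    (Q : ℕ → B → ℝ) (hQ : ∀ s y, 0 ≤ Q s y) (hQs : ∀ s, ∑ y, Q s y = 1) :
    let bw : (Fin N → Bool) → ℝ := fun x => ∏ i, if x i then P₁ else 1 - P₁
    let cnt : (Fin N → Bool) → ℕ := fun x => ∑ i, if x i then 1 else 0
    let prS : ℕ → ℝ := fun s => ∑ x ∈ univ.filter (fun x => cnt x = s), bw x
    let prY : B → ℝ := fun y => ∑ x, bw x * Q (cnt x) y
    (∀ (s : ℕ) (y : B), 0 < prY y → 0 < prS s →
      exp (-ε) ≤ prS s / (prS s * Q s y / prY y) ∧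
        prS s / (prS s * Q s y / prY y) ≤ exp ε) →
    ∀ (i : Fin N) (j : Bool) (y : B), 0 < prY y →
      exp (-ε) ≤ (if j then P₁ else 1 - P₁) /
          ((∑ x ∈ univ.filter (fun x => x i = j), bw x * Q (cnt x) y) / prY y) ∧
        (if j then P₁ else 1 - P₁) /
          ((∑ x ∈ univ.filter (fun x => x i = j), bw x * Q (cnt x) y) / prY y)
          ≤ exp ε := by
  intro bw cnt prS prY hS i j y hy
  obtain ⟨hP0, hP1⟩ := hP
  set p : ℝ := if j then P₁ else 1 - P₁ with hp_def
  have hp : 0 < p := by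
    simp only [hp_def]; split <;> [exact hP0; linarith]
  -- positivity of bernoulli weights
  have hbw : ∀ x : Fin N → Bool, 0 < bw x := fun x =>
    Finset.prod_pos (fun k _ => by by_cases h : x k <;> simp [h] <;> linarith)
  -- sum of weights over filter equals p
  have hsum : ∑ x ∈ univ.filter (fun x => x i = j), bw x = p :=
    sum_filter_prod_bernoulli (fun b => if b then P₁ else 1 - P₁) (by simp) i j
  -- bounds on Q (cnt x) y for each x
  have hQbound : ∀ x : Fin N → Bool,
      exp (-ε) * prY y ≤ Q (cnt x) y ∧ Q (cnt x) y ≤ exp ε * prY y := by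
    intro x
    have hprS : 0 < prS (cnt x) := by
      refine lt_of_lt_of_le (hbw x) ?_
      exact Finset.single_le_sum (fun z _ => (hbw z).le) (by simp)
    obtain ⟨h1, h2⟩ := hS (cnt x) y hy hprS
    have hQpos : 0 < Q (cnt x) y := by
      rcases (hQ (cnt x) y).lt_or_eq with h | h
      · exact h
      · exfalso
        rw [← h] at h1
        simp only [mul_zero, zero_div, div_zero] at h1
        exact absurd h1 (not_le.mpr (exp_pos _))
    have key : prS (cnt x) / (prS (cnt x) * Q (cnt x) y / prY y) = prY y / Q (cnt x) y := by
      field_simp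
    rw [key] at h1 h2
    have hee : exp (-ε) * exp ε = 1 := by rw [← Real.exp_add]; simp
    constructor
    · rw [div_le_iff₀ hQpos] at h2
      have := mul_le_mul_of_nonneg_left h2 (exp_pos (-ε)).le
      calc exp (-ε) * prY y ≤ exp (-ε) * (exp ε * Q (cnt x) y) := this
        _ = Q (cnt x) y := by rw [← mul_assoc, hee, one_mul]
    · rw [le_div_iff₀ hQpos] at h1
      have := mul_le_mul_of_nonneg_left h1 (exp_pos ε).le
      calc Q (cnt x) y = exp ε * (exp (-ε) * Q (cnt x) y) := by
            rw [← mul_assoc, mul_comm (exp ε), hee, one_mul]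
        _ ≤ exp ε * prY y := this
  set num : ℝ := ∑ x ∈ univ.filter (fun x => x i = j), bw x * Q (cnt x) y with hnum_def
  have hlo : p * (exp (-ε) * prY y) ≤ num := by
    rw [← hsum, Finset.sum_mul]
    exact Finset.sum_le_sum fun x _ =>
      (mul_le_mul_of_nonneg_left (hQbound x).1 (hbw x).le).trans_eq (by ring) |>.trans_eq rfl
  have hhi : num ≤ p * (exp ε * prY y) := by
    rw [← hsum, Finset.sum_mul]
    exact Finset.sum_le_sum fun x _ =>
      (mul_le_mul_of_nonneg_left (hQbound x).2 (hbw x).le)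
  have hnum_pos : 0 < num :=
    lt_of_lt_of_le (by positivity) hlo
  have hpost_pos : 0 < num / prY y := div_pos hnum_pos hy
  have hee : exp (-ε) * exp ε = 1 := by rw [← Real.exp_add]; simp
  have hq1 : num / prY y ≤ p * exp ε := by
    rw [div_le_iff₀ hy]; calc num ≤ p * (exp ε * prY y) := hhi
      _ = p * exp ε * prY y := by ring
  have hq2 : p * exp (-ε) ≤ num / prY y := by
    rw [le_div_iff₀ hy]; calc p * exp (-ε) * prY y = p * (exp (-ε) * prY y) := by ring
      _ ≤ num := hlo
  constructor
  · rw [le_div_iff₀ hpost_pos]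
    calc exp (-ε) * (num / prY y) ≤ exp (-ε) * (p * exp ε) :=
          mul_le_mul_of_nonneg_left hq1 (exp_pos _).le
      _ = p := by rw [mul_comm p, ← mul_assoc, hee, one_mul]
  · rw [div_le_iff₀ hpost_pos]
    calc p = p * exp (-ε) * exp ε := by rw [mul_assoc, hee, mul_one]
      _ ≤ num / prY y * exp ε :=
          mul_le_mul_of_nonneg_right hq2 (exp_pos _).le
      _ = exp ε * (num / prY y) := mul_comm _ _
end
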